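/- arXiv:2410.19102 — 2 statements merged into one kernel-verified Lean document; each statement's English description precedes it below -/
import Mathlib

section
/- In any implementation history of Algorithm 1 (the wait-free universal construction from GCAS and F&I objects), suppose a process p's response object H_p equals (t, r) at time T with r ≠ NULL. Then for all times T' ≥ T, if H_p.time = t at T' then H_p.response = r at T'. -/
/-!
An abstract model of an (arbitrary) implementation history of Algorithm 1,
the wait-free universal construction from generalized-compare-and-swap (GCAS)
and fetch-and-increment (F&I) objects.

Time is modelled by `ℕ`: the value of a shared object at time `T` is its value
after all steps at times `≤ T`; the step at time `T+1` is responsible for any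
change between `T` and `T+1`.  The fields of the structure record the contents
of the shared objects over time, the occurrences of the relevant low-level
steps of the algorithm, and the well-formedness facts about Algorithm 1
(Observations 1-6 and the line-by-line behaviour described in the paper).
-/
structure AlgHistory where
  /-- processes (possibly infinitely many, asynchronous, may crash) -/
  Proc : Type
  /-- operation executions on the implemented object (including the fictitious `NOOP`) -/
  Op : Type
  /-- response values of type `𝒯` together with the special values `NULL` and `⊥` -/
  Val : Type
  /-- states of the implemented object of type `𝒯` -/
  St : Type
  /-- `NULL`, a value differing from all possible responses of type `𝒯` (Assumption 1) -/
  NULL : Val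
  /-- the initial dummy response `⊥` stored in `h(NOOP)` and in `S` -/
  bot : Val
  bot_ne_null : bot ≠ NULL
  /-- the fictitious operation `NOOP` -/
  NOOP : Op
  /-- the initial state `s₀` of type `𝒯` -/
  s0 : St
  /-- the state transition relation `δ ⊆ Q × OP × Q × RES` of type `𝒯` -/
  delta : St → Op → St → Val → Prop
  /-- `p(o)`: the process that executed operation `o` -/
  owner : Op → Proc
  /-- `t(o)`: the timestamp of `o` obtained from the F&I object `C` (with `t(NOOP) = 0`) -/
  ts : Op → ℕ
  ts_noop : ts NOOP = 0
  ts_pos : ∀ o, o ≠ NOOP → 1 ≤ ts o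
  /-- Observation 2: distinct operations have distinct timestamps -/
  ts_inj : Function.Injective ts
  /-- the `time` field of process `p`'s response object `H_p` at time `T` -/
  Htime : Proc → ℕ → ℕ
  /-- the `response` field of process `p`'s response object `H_p` at time `T` -/
  Hresp : Proc → ℕ → Val
  /-- the `time` field of `h(o)`, the response object of `o`'s owner, at time `T` -/
  hT : Op → ℕ → ℕ
  /-- the `response` field of `h(o)` at time `T` -/
  hR : Op → ℕ → Val
  h_owner_time : ∀ o, o ≠ NOOP → hT o = Htime (owner o)
  h_owner_resp : ∀ o, o ≠ NOOP → hR o = Hresp (owner o)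
  /-- `h(NOOP)` points to an immutable location containing `(0, ⊥)` -/
  h_noop_time : ∀ T, hT NOOP T = 0
  h_noop_resp : ∀ T, hR NOOP T = bot
  /-- Observation 3: the (unique) operation stored in the announce object `A` at time `T` -/
  announce : ℕ → Op
  /-- Observation 4: the (unique) operation stored in the state object `S` at time `T` -/
  Sop : ℕ → Op
  /-- the `state` field of `S` at time `T` -/
  Sstate : ℕ → St
  /-- the `response` field of `S` at time `T` -/
  Sresp : ℕ → Val
  A_init : announce 0 = NOOP
  S_init_op : Sop 0 = NOOP
  S_init_state : Sstate 0 = s0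
  S_init_resp : Sresp 0 = bot
  /-- Observation 4: the response stored in `S` is never `NULL` -/
  Sresp_ne_null : ∀ T, Sresp T ≠ NULL
  /- ------------------------- events (low-level steps) ------------------------- -/
  /-- the invocation step of `DoOp(o)` (line 1) occurs at time `T` -/
  invoke : Op → ℕ → Prop
  /-- `p(o)` takes a low-level step of `DoOp(o)` at time `T` -/
  step : Op → ℕ → Prop
  /-- process `p` executes line 3 (resetting its response object) at time `T` -/
  line3 : Proc → ℕ → Prop
  /-- line 6 (the GCAS `GCAS(=, h(o), (t(o), NULL), (t(o), r))`, `r ≠ NULL`,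
      copying a response into `h(o)`) is executed for operation `o` at time `T`
      (Observation 5) -/
  line6For : Op → ℕ → Prop
  /-- a *successful* `GCAS(>, A, (t(o),-,-), (t(o), o, &h(o)))` on line 7 announcing `o`
      occurs at time `T` -/
  line7 : Op → ℕ → Prop
  /-- a *successful* `GCAS(=, A, -, (t(o), o, &h(o)))` on line 13 announcing `o`
      occurs at time `T` -/
  line13 : Op → ℕ → Prop
  /-- line 12 (the GCAS on `S`) is executed *for operation `o`*, i.e. in the form
      `GCAS(=, S, -, (t(o), -, r, h(o)))` (Observation 4), at time `T` -/
  line12For : Op → ℕ → Prop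
  /-- line 12 is executed for `o` at time `T` and this execution returns true -/
  line12True : Op → ℕ → Prop
  /-- `p(o)` executes the return step (line 14, `return h(o).response`) of `DoOp(o)` at `T` -/
  line14 : Op → ℕ → Prop
  /-- for an execution of line 12 at time `T`: the time of the read of `S` on line 5
      in the same loop iteration -/
  read5 : ℕ → ℕ
  /-- for an execution of line 12 at time `T`: the time of the read of `A` on line 8
      in the same loop iteration -/
  read8 : ℕ → ℕ
  /-- for an execution of line 12 at time `T`: the time of the read of the announced
      operation's response object on line 9 in the same loop iteration -/
  read9 : ℕ → ℕ
  /-- the `state` field of the new value of the line-12 GCAS executed at time `T` -/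
  newState : ℕ → St
  /-- the `response` field of the new value of the line-12 GCAS executed at time `T` -/
  newResp : ℕ → Val
  /- ------------------- dynamics of the response objects ------------------- -/
  /-- Observation 6: the `time` field of `H_p` is monotonically increasing -/
  htime_mono : ∀ p, Monotone (Htime p)
  /-- Observation 6: `H_p.time` only changes by `p` executing line 3 -/
  htime_change : ∀ p T, Htime p (T + 1) ≠ Htime p T → line3 p (T + 1)
  /-- Observation 6: every execution of line 3 by `p` sets `H_p.time` to a unique value -/
  line3_fresh : ∀ p T T', line3 p T → line3 p T' → Htime p T = Htime p T' → T = T'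
  /-- line 3 sets `H_p` to `(t, NULL)` for the fresh timestamp `t` -/
  line3_resets : ∀ p T, line3 p (T + 1) →
    Hresp p (T + 1) = NULL ∧ Htime p (T + 1) ≠ Htime p T
  /-- the `response` field only changes from `NULL` (via the GCAS on line 6),
      except when `p` executes line 3 -/
  hresp_change : ∀ p T, Hresp p (T + 1) ≠ Hresp p T → line3 p (T + 1) ∨ Hresp p T = NULL
  /-- every execution of line 3 by a process is on behalf of one of its own
      (non-`NOOP`) operations, with the fresh timestamp of that operation -/
  line3_forOp : ∀ p T, line3 p T → ∃ o, o ≠ NOOP ∧ owner o = p ∧ Htime p T = ts o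
  /-- program order: a process invokes (executes line 3 for) a new operation only
      after completing its previous operation -/
  program_order : ∀ o o', o ≠ o' → owner o = owner o' →
    ∀ T T', line3 (owner o) T → Htime (owner o) T = ts o →
      line3 (owner o) T' → Htime (owner o) T' = ts o' → T < T' →
        ∃ Tr, T ≤ Tr ∧ Tr < T' ∧ line14 o Tr
  /- ------------------------- dynamics of line 6 ------------------------- -/
  /-- line 6 is executed for `o` only after `o` was read as stored in `S` on line 5 -/
  line6_ctx : ∀ o T, line6For o T → ∃ T5 < T, Sop T5 = o
  /-- effect of a successful line-6 GCAS: if `h(o) = (t(o), NULL)` just before,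
      then afterwards `h(o) = (t(o), r)` with `r ≠ NULL` -/
  line6_effect : ∀ o T, line6For o T → hT o (T - 1) = ts o → hR o (T - 1) = NULL →
    hT o T = ts o ∧ hR o T ≠ NULL
  /- ------------------------- dynamics of line 12 ------------------------- -/
  line12_true_for : ∀ o T, line12True o T → line12For o T
  /-- at most one execution of line 12 occurs at any given time -/
  line12_at_most_one : ∀ o o' T, line12For o T → line12For o' T → o = o'
  /-- an execution of line 12 for `o` at time `T` happens in a loop iteration in
      which `S` was read on line 5, `(t(o), o, h(o))` was read from `A` on line 8,
      `h(o)` was read equal to `(t(o), NULL)` on line 9, and the test on line 10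
      passed -/
  line12_iter : ∀ o T, line12For o T →
    read5 T < read8 T ∧ read8 T < read9 T ∧ read9 T < T ∧
    announce (read8 T) = o ∧ hT o (read9 T) = ts o ∧ hR o (read9 T) = NULL
  /-- the new value of the line-12 GCAS is obtained from `apply_𝒯(o, s*)`, where `s*`
      was read from `S` on line 5; hence it respects `δ` -/
  line12_delta : ∀ o T, line12For o T → delta (Sstate (read5 T)) o (newState T) (newResp T)
  /-- the response written by line 12 is a response of `apply_𝒯`, hence not `NULL` -/
  newResp_ne_null : ∀ o T, line12For o T → newResp T ≠ NULL
  /-- effect of a successful line-12 GCAS: `S` now stores `o` with the new value -/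
  line12_effect : ∀ o T, line12True o T → Sop T = o ∧ Sstate T = newState T ∧ Sresp T = newResp T
  /-- a line-12 GCAS succeeds only if `S` still holds the value read on line 5 -/
  line12_success_prev : ∀ o T, line12True o (T + 1) →
    Sop T = Sop (read5 (T + 1)) ∧ Sstate T = Sstate (read5 (T + 1)) ∧
      Sresp T = Sresp (read5 (T + 1))
  /-- `S` is only modified by successful executions of line 12 -/
  S_change : ∀ T, (Sop (T + 1) ≠ Sop T ∨ Sstate (T + 1) ≠ Sstate T ∨ Sresp (T + 1) ≠ Sresp T) →
    ∃ o, line12True o (T + 1)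
  /- --------------------- dynamics of the announce object --------------------- -/
  /-- `A` is only modified by successful GCASes on lines 7 and 13 -/
  announce_change : ∀ T, announce (T + 1) ≠ announce T →
    ∃ o, (line7 o (T + 1) ∨ line13 o (T + 1)) ∧ announce (T + 1) = o
  /-- the `GCAS(>, A, ...)` on line 7 succeeds only if the new timestamp is strictly
      smaller than the timestamp currently stored in `A` -/
  line7_lt : ∀ o T, line7 o (T + 1) → ts o < ts (announce T) ∧ announce (T + 1) = o
  /-- the `GCAS(=, A, ...)` on line 13 is executed only after the announcing process
      observed (on lines 8-10) the currently announced operation to be done -/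
  line13_effect : ∀ o T, line13 o (T + 1) → announce (T + 1) = o ∧
    ∃ T9 ≤ T, ¬(hT (announce T) T9 = ts (announce T) ∧ hR (announce T) T9 = NULL)
  /-- announcing `o` (on line 7 or 13) is a step of `DoOp(o)` by `p(o)` -/
  line7_step : ∀ o T, line7 o T → step o T
  line13_step : ∀ o T, line13 o T → step o T
  /- ------------------------- invocations and returns ------------------------- -/
  invoke_unique : ∀ o T T', invoke o T → invoke o T' → T = T'
  /-- steps of `DoOp(o)` occur only after `DoOp(o)` was invoked -/
  step_invoked : ∀ o T, step o T → ∃ T' ≤ T, invoke o T'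
  /-- `NOOP` is never invoked -/
  noop_not_invoked : ∀ T, ¬ invoke NOOP T
  /-- an operation stored in `A` (other than `NOOP`) has been invoked -/
  announced_invoked : ∀ o T, announce T = o → o ≠ NOOP → ∃ T', T' ≤ T ∧ invoke o T'
  /-- `p(o)` exits its loop and executes line 14 only after the guard on line 4
      (`h(o) = (t(o), NULL)`) became false while the `time` field still equals `t(o)` -/
  line14_guard : ∀ o T, line14 o T → ∃ T' < T, hT o T' = ts o ∧ hR o T' ≠ NULL
  line14_step : ∀ o T, line14 o T → step o T

namespace AlgHistory

variable (M : AlgHistory)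

/-- Operation `o` is *done* at time `T` (Definition 4): there is a time `T' ≤ T`
at which `h(o) = (t(o), r)` with `r ≠ NULL`. -/
def done (o : M.Op) (T : ℕ) : Prop :=
  ∃ T' ≤ T, M.hT o T' = M.ts o ∧ M.hR o T' ≠ M.NULL

/-- Operation `o` is *complete* at time `T` (Definition 3): `p(o)` executed
line 14 of `DoOp(o)` at some time `T' ≤ T`. -/
def completeAt (o : M.Op) (T : ℕ) : Prop :=
  ∃ T' ≤ T, M.line14 o T'

end AlgHistory

namespace AlgHistory

variable (M : AlgHistory) {p : M.Proc}

/-- A non-`NULL` response can only be overwritten by line 3, which also changes the time. -/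
theorem hresp_succ_eq_of_htime_succ_eq {T : ℕ} (htime : M.Htime p (T + 1) = M.Htime p T)
    (hresp : M.Hresp p T ≠ M.NULL) : M.Hresp p (T + 1) = M.Hresp p T := by
  by_contra hchange
  rcases M.hresp_change p T hchange with hline3 | hnull
  · exact (M.line3_resets p T hline3).2 htime
  · exact hresp hnull

theorem htime_eq_of_le_of_le {T S T' : ℕ} (hTS : T ≤ S) (hST' : S ≤ T')
    (htime : M.Htime p T' = M.Htime p T) : M.Htime p S = M.Htime p T :=
  le_antisymm (htime ▸ M.htime_mono p hST') (M.htime_mono p hTS)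

theorem hresp_eq_of_htime_eq {T T' : ℕ} (hTT' : T ≤ T') (hresp : M.Hresp p T ≠ M.NULL) :
    M.Htime p T' = M.Htime p T → M.Hresp p T' = M.Hresp p T := by
  induction T', hTT' using Nat.le_induction with
  | base => exact fun _ => rfl
  | succ S hTS ih =>
    intro htime
    have htimeS : M.Htime p S = M.Htime p T := M.htime_eq_of_le_of_le hTS S.le_succ htime
    have hrespS : M.Hresp p S = M.Hresp p T := ih htimeS
    rw [M.hresp_succ_eq_of_htime_succ_eq (htime.trans htimeS.symm) (hrespS ▸ hresp), hrespS]

end AlgHistory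

/-- Lemma 1: In any implementation history of Algorithm 1, suppose a
process `p`'s response object `H_p` equals `(t, r)` at time `T` with `r ≠ NULL`.
Then for all times `T' ≥ T`, if `H_p.time = t` at `T'` then `H_p.response = r` at `T'`. -/
theorem response_persists_while_time_unchanged (M : AlgHistory) (p : M.Proc)
    (t : ℕ) (r : M.Val) (T : ℕ)
    (htime : M.Htime p T = t) (hresp : M.Hresp p T = r) (hr : r ≠ M.NULL) :
    ∀ T' ≥ T, M.Htime p T' = t → M.Hresp p T' = r := by
  subst htime hresp
  exact fun T' hTT' => M.hresp_eq_of_htime_eq hTT' hr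
end

section
/- In any implementation history of Algorithm 1, suppose a process p reads (t(o), o, h(o)) from the announce object A on line 8 at time T, and o is done at T. Then if p executes the test on line 10 after T (in the same loop iteration), the condition of line 10 — that the pair read from h(o) on line 9 equals (t(o), NULL) — evaluates to false. -/
/-!
If `o` is done, its owner's response object has held `(t(o), r)` with `r ≠ NULL` at some
earlier time. The `time` field is monotone, so if it reads `t(o)` again later it was `t(o)`
throughout; the `response` field can then only leave a non-`NULL` value through a reset on
line 3, which would change the `time` field. Hence `h(o)` can never again read `(t(o), NULL)`.
-/

namespace AlgHistory

variable (M : AlgHistory)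

theorem Htime_eq_of_le_of_le {p : M.Proc} {a b c : ℕ} (hac : a ≤ c) (hcb : c ≤ b)
    (hab : M.Htime p a = M.Htime p b) : M.Htime p c = M.Htime p a :=
  le_antisymm (hab ▸ M.htime_mono p hcb) (M.htime_mono p hac)

theorem Hresp_succ_ne_null {p : M.Proc} {n : ℕ} (hn : M.Hresp p n ≠ M.NULL)
    (htime : M.Htime p (n + 1) = M.Htime p n) : M.Hresp p (n + 1) ≠ M.NULL := by
  intro hnull
  rcases M.hresp_change p n (by rw [hnull]; exact hn.symm) with hline3 | hn'
  · exact (M.line3_resets p n hline3).2 htime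
  · exact hn hn'

theorem Hresp_ne_null_of_Htime_eq {p : M.Proc} {a b : ℕ} (hab : a ≤ b)
    (htime : M.Htime p a = M.Htime p b) (ha : M.Hresp p a ≠ M.NULL) :
    M.Hresp p b ≠ M.NULL := by
  suffices ∀ c, a ≤ c → c ≤ b → M.Hresp p c ≠ M.NULL from this b hab le_rfl
  intro c hac
  induction c, hac using Nat.le_induction with
  | base => exact fun _ => ha
  | succ n han ih =>
    intro hnb
    refine M.Hresp_succ_ne_null (ih (by omega)) ?_
    rw [M.Htime_eq_of_le_of_le (by omega) hnb htime,
      M.Htime_eq_of_le_of_le han (by omega) htime]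

theorem hR_ne_null_of_done {o : M.Op} {T S : ℕ} (hdone : M.done o T) (hTS : T ≤ S)
    (htime : M.hT o S = M.ts o) : M.hR o S ≠ M.NULL := by
  by_cases hnoop : o = M.NOOP
  · subst hnoop
    rw [M.h_noop_resp]
    exact M.bot_ne_null
  obtain ⟨T', hT'T, htime', hresp'⟩ := hdone
  rw [M.h_owner_time o hnoop] at htime htime'
  rw [M.h_owner_resp o hnoop] at hresp' ⊢
  exact M.Hresp_ne_null_of_Htime_eq (hT'T.trans hTS) (htime'.trans htime.symm) hresp'

end AlgHistory

theorem observed_done_line10_false_general (M : AlgHistory) (o : M.Op) (T : ℕ)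
    (h2 : M.done o T) :
    ∀ T9 > T, ¬(M.hT o T9 = M.ts o ∧ M.hR o T9 = M.NULL) :=
  fun _ hT9 ⟨htime, hnull⟩ => M.hR_ne_null_of_done h2 hT9.le htime hnull

/-- Lemma 7: In any implementation history of Algorithm 1, suppose a
process `p` reads `(t(o), o, h(o))` from the announce object `A` on line 8 at time `T`
(i.e. `o` is stored in `A` at `T`), and `o` is done at `T`.  Then whenever `p`
subsequently (at any time `T9 > T`, in the same loop iteration) reads the pair
`(t̂, r̂)` from `h(o)` on line 9 and tests it on line 10, the condition of line 10 —
that the pair read equals `(t(o), NULL)` — evaluates to false. -/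
theorem observed_done_line10_false (M : AlgHistory) (o : M.Op) (T : ℕ)
    (h1 : M.announce T = o) (h2 : M.done o T) :
    ∀ T9 > T, ¬(M.hT o T9 = M.ts o ∧ M.hR o T9 = M.NULL) :=
  observed_done_line10_false_general M o T h2
end
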